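/- Let Q : [0,∞)×ℝ → [0,∞) be continuously differentiable in its first argument and satisfy f·∂_f Q(f,P) ≤ 3 Q(f,P) for all f ≥ 0 and P ∈ ℝ. Let f₀ be a nonnegative function in L¹(ℝ⁶) with ∫∫ f₀ dv dx = M > 0, finite kinetic energy, finite Casimir integral and finite Coulomb energy, satisfying the virial relation 2 E_kin(f₀) + E_pot(f₀) = 0. Define U₀(x) := −∫ ρ_{f₀}(y)/|x−y| dy, E(x,v) := ½|v|² + U₀(x), and E₀ := (1/M) ∫∫ [E + ∂_f Q(f₀,P)] f₀ dv dx. Then E₀ = (1/M)[ E_kin(f₀) + 2 E_pot(f₀) + ∫∫ f₀ ∂_f Q(f₀,P) dv dx ] and E₀ ≤ 3 ℋ_C(f₀)/M. In particular, if ℋ_C(f₀) < 0 then E₀ < 0. -/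

import Mathlib

open MeasureTheory Real Filter Topology

noncomputable section

abbrev E3 := EuclideanSpace ℝ (Fin 3)

def e3 (a b c : ℝ) : E3 := (WithLp.equiv 2 (Fin 3 → ℝ)).symm ![a, b, c]

/-- third component of the angular momentum, P(x,v) = x₁v₂ − x₂v₁ -/
def angmom (z : E3 × E3) : ℝ := z.1 0 * z.2 1 - z.1 1 * z.2 0

/-- induced spatial density ρ_f -/
def rho (f : E3 × E3 → ℝ) (x : E3) : ℝ := ∫ v : E3, f (x, v)

/-- kinetic energy -/
def Ekin (f : E3 × E3 → ℝ) : ℝ := (1/2) * ∫ z : E3 × E3, ‖z.2‖^2 * f z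

/-- potential energy -/
def Epot (f : E3 × E3 → ℝ) : ℝ :=
  -(1/2) * ∫ x : E3, ∫ y : E3, rho f x * rho f y / ‖x - y‖

/-- Casimir functional 𝒞 -/
def Casimir (Q : ℝ → ℝ → ℝ) (f : E3 × E3 → ℝ) : ℝ :=
  ∫ z : E3 × E3, Q (f z) (angmom z)

/-- energy-Casimir functional ℋ_C -/
def HC (Q : ℝ → ℝ → ℝ) (f : E3 × E3 → ℝ) : ℝ := Ekin f + Epot f + Casimir Q f

/-- rotation about the x₃-axis by angle θ -/
def rotZ (θ : ℝ) (x : E3) : E3 :=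
  e3 (Real.cos θ * x 0 - Real.sin θ * x 1) (Real.sin θ * x 0 + Real.cos θ * x 1) (x 2)

/-- axial symmetry: invariance under all rotations about the x₃-axis -/
def AxiSym (f : E3 × E3 → ℝ) : Prop :=
  ∀ (θ : ℝ) (z : E3 × E3), f (rotZ θ z.1, rotZ θ z.2) = f z

/-- membership in the constraint set ℱ_M -/
def MemFM (Q : ℝ → ℝ → ℝ) (M : ℝ) (f : E3 × E3 → ℝ) : Prop :=
  Integrable f ∧ (∀ z, 0 ≤ f z) ∧ (∫ z : E3 × E3, f z) = M ∧
    Integrable (fun z : E3 × E3 => ‖z.2‖^2 * f z) ∧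
    Integrable (fun z : E3 × E3 => Q (f z) (angmom z))

/-- membership in the axially symmetric constraint set ℱ_M^S -/
def MemFMS (Q : ℝ → ℝ → ℝ) (M : ℝ) (f : E3 × E3 → ℝ) : Prop :=
  MemFM Q M f ∧ AxiSym f

/-- h_M = inf of ℋ_C over ℱ_M -/
def hInf (Q : ℝ → ℝ → ℝ) (M : ℝ) : ℝ := sInf (HC Q '' {f | MemFM Q M f})

/-- h_M^S = inf of ℋ_C over ℱ_M^S -/
def hInfS (Q : ℝ → ℝ → ℝ) (M : ℝ) : ℝ := sInf (HC Q '' {f | MemFMS Q M f})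

/-- induced gravitational potential U₀ of a state f₀ -/
def U0 (f0 : E3 × E3 → ℝ) (x : E3) : ℝ := -∫ y : E3, rho f0 y / ‖x - y‖

/-- particle energy E(x,v) = ½|v|² + U₀(x) -/
def Eng (f0 : E3 × E3 → ℝ) (z : E3 × E3) : ℝ := (1/2) * ‖z.2‖^2 + U0 f0 z.1

/-- φ(s,P) = (∂_f Q(·,P))⁻¹(s) for s ≥ 0, and 0 for s < 0 -/
def phi (Qf : ℝ → ℝ → ℝ) (s P : ℝ) : ℝ :=
  if 0 ≤ s then Function.invFunOn (fun t => Qf t P) (Set.Ici 0) s else 0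

/-! Integrating out `v` turns `∫∫ U₀ f₀` into `∫ U₀ ρ_{f₀} = 2 E_pot(f₀)`, so
`∫∫ (E + ∂_f Q) f₀ = E_kin + 2 E_pot + ∫∫ f₀ ∂_f Q`. The virial relation rewrites
`E_kin + 2 E_pot` as `3 (E_kin + E_pot)`, and `f ∂_f Q ≤ 3 Q` bounds the last integral
by `3 𝒞(f₀)`. -/

lemma integral_mul_fst_eq_integral_mul_rho {f : E3 × E3 → ℝ} {g : E3 → ℝ}
    (h : Integrable (fun z : E3 × E3 => g z.1 * f z)) :
    ∫ z : E3 × E3, g z.1 * f z = ∫ x : E3, g x * rho f x := by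
  rw [Measure.volume_eq_prod] at h ⊢
  rw [integral_prod _ h]
  simp only [integral_const_mul, rho]

lemma integral_U0_mul_rho (f : E3 × E3 → ℝ) :
    ∫ x : E3, U0 f x * rho f x = 2 * Epot f := by
  have hinner : ∀ x : E3, U0 f x * rho f x = -∫ y : E3, rho f x * rho f y / ‖x - y‖ := by
    intro x
    simp only [U0, mul_div_assoc, integral_const_mul]
    ring
  simp only [hinner, integral_neg, Epot]
  ring

lemma integral_Eng_mul {f : E3 × E3 → ℝ}
    (hkin : Integrable (fun z : E3 × E3 => ‖z.2‖^2 * f z))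
    (hEf : Integrable (fun z : E3 × E3 => Eng f z * f z)) :
    ∫ z : E3 × E3, Eng f z * f z = Ekin f + 2 * Epot f := by
  have hsplit : (fun z : E3 × E3 => Eng f z * f z)
      = fun z => (1/2) * (‖z.2‖^2 * f z) + U0 f z.1 * f z := by
    funext z; simp only [Eng]; ring
  have hU0 : Integrable (fun z : E3 × E3 => U0 f z.1 * f z) := by
    refine (hEf.sub (hkin.const_mul (1/2))).congr (Filter.Eventually.of_forall fun z => ?_)
    simp only [Pi.sub_apply, Eng]; ring
  rw [hsplit, integral_add (hkin.const_mul _) hU0, integral_const_mul,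
    integral_mul_fst_eq_integral_mul_rho hU0, integral_U0_mul_rho f, Ekin]

lemma integral_Qf'_mul_le_three_Casimir {Q Qf' : ℝ → ℝ → ℝ} {f : E3 × E3 → ℝ}
    (h3Q : ∀ s P : ℝ, 0 ≤ s → s * Qf' s P ≤ 3 * Q s P) (hnn : ∀ z, 0 ≤ f z)
    (hQf : Integrable (fun z : E3 × E3 => Qf' (f z) (angmom z) * f z))
    (hcas : Integrable (fun z : E3 × E3 => Q (f z) (angmom z))) :
    ∫ z : E3 × E3, Qf' (f z) (angmom z) * f z ≤ 3 * Casimir Q f := by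
  rw [Casimir, ← integral_const_mul]
  refine integral_mono hQf (hcas.const_mul 3) fun z => ?_
  simpa only [mul_comm] using h3Q (f z) (angmom z) (hnn z)

theorem stmt18_general (Q Qf' : ℝ → ℝ → ℝ)
    (h3Q : ∀ s P : ℝ, 0 ≤ s → s * Qf' s P ≤ 3 * Q s P)
    (M : ℝ) (hMpos : 0 < M) (f0 : E3 × E3 → ℝ)
    (hnn : ∀ z, 0 ≤ f0 z)
    (hkin : Integrable (fun z : E3 × E3 => ‖z.2‖^2 * f0 z))
    (hcas : Integrable (fun z : E3 × E3 => Q (f0 z) (angmom z)))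
    (hQff0 : Integrable (fun z : E3 × E3 => Qf' (f0 z) (angmom z) * f0 z))
    (hEf0 : Integrable (fun z : E3 × E3 => Eng f0 z * f0 z))
    (hvirial : 2 * Ekin f0 + Epot f0 = 0) :
    (1/M) * (∫ z : E3 × E3, (Eng f0 z + Qf' (f0 z) (angmom z)) * f0 z) =
      (1/M) * (Ekin f0 + 2 * Epot f0 +
        ∫ z : E3 × E3, Qf' (f0 z) (angmom z) * f0 z) ∧
    (1/M) * (∫ z : E3 × E3, (Eng f0 z + Qf' (f0 z) (angmom z)) * f0 z) ≤
      3 * HC Q f0 / M ∧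
    (HC Q f0 < 0 →
      (1/M) * (∫ z : E3 × E3, (Eng f0 z + Qf' (f0 z) (angmom z)) * f0 z) < 0) := by
  have hsplit : ∫ z : E3 × E3, (Eng f0 z + Qf' (f0 z) (angmom z)) * f0 z
      = Ekin f0 + 2 * Epot f0 + ∫ z : E3 × E3, Qf' (f0 z) (angmom z) * f0 z := by
    simp only [add_mul]
    rw [integral_add hEf0 hQff0, integral_Eng_mul hkin hEf0]
  have hcasimir := integral_Qf'_mul_le_three_Casimir h3Q hnn hQff0 hcas
  have hle : (1/M) * (∫ z : E3 × E3, (Eng f0 z + Qf' (f0 z) (angmom z)) * f0 z)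
      ≤ 3 * HC Q f0 / M := by
    rw [hsplit, one_div_mul_eq_div]
    gcongr
    rw [HC]
    linarith
  refine ⟨by rw [hsplit], hle, fun hneg => hle.trans_lt ?_⟩
  exact div_neg_of_neg_of_pos (by linarith) hMpos

/-- If f ∂_f Q(f,P) ≤ 3 Q(f,P) and f₀ satisfies the virial relation
2E_kin + E_pot = 0, then E₀ = (1/M)[E_kin + 2E_pot + ∫∫ f₀ ∂_f Q(f₀,P)] and
E₀ ≤ 3ℋ_C(f₀)/M; in particular E₀ < 0 whenever ℋ_C(f₀) < 0. -/
theorem stmt18 (Q Qf' : ℝ → ℝ → ℝ)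
    (hQnonneg : ∀ s P : ℝ, 0 ≤ s → 0 ≤ Q s P)
    (hQderiv : ∀ s P : ℝ, 0 ≤ s → HasDerivWithinAt (fun t => Q t P) (Qf' s P) (Set.Ici 0) s)
    (hQfcont : ContinuousOn (fun p : ℝ × ℝ => Qf' p.1 p.2) (Set.Ici (0:ℝ) ×ˢ (Set.univ : Set ℝ)))
    (h3Q : ∀ s P : ℝ, 0 ≤ s → s * Qf' s P ≤ 3 * Q s P)
    (M : ℝ) (hMpos : 0 < M) (f0 : E3 × E3 → ℝ)
    (hf0 : Integrable f0) (hnn : ∀ z, 0 ≤ f0 z)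
    (hmass : (∫ z : E3 × E3, f0 z) = M)
    (hkin : Integrable (fun z : E3 × E3 => ‖z.2‖^2 * f0 z))
    (hcas : Integrable (fun z : E3 × E3 => Q (f0 z) (angmom z)))
    (hcoul : Integrable (fun p : E3 × E3 => rho f0 p.1 * rho f0 p.2 / ‖p.1 - p.2‖))
    (hQff0 : Integrable (fun z : E3 × E3 => Qf' (f0 z) (angmom z) * f0 z))
    (hEf0 : Integrable (fun z : E3 × E3 => Eng f0 z * f0 z))
    (hvirial : 2 * Ekin f0 + Epot f0 = 0) :
    (1/M) * (∫ z : E3 × E3, (Eng f0 z + Qf' (f0 z) (angmom z)) * f0 z) =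
      (1/M) * (Ekin f0 + 2 * Epot f0 +
        ∫ z : E3 × E3, Qf' (f0 z) (angmom z) * f0 z) ∧
    (1/M) * (∫ z : E3 × E3, (Eng f0 z + Qf' (f0 z) (angmom z)) * f0 z) ≤
      3 * HC Q f0 / M ∧
    (HC Q f0 < 0 →
      (1/M) * (∫ z : E3 × E3, (Eng f0 z + Qf' (f0 z) (angmom z)) * f0 z) < 0) :=
  stmt18_general Q Qf' h3Q M hMpos f0 hnn hkin hcas hQff0 hEf0 hvirial
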